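/- If X_{a*} x ≠ 0, then for any fixed choice of perturbations Δ_a ∈ ℝ^{m_a} for the arms a ≠ a*, there exists a perturbation Δ_{a*} ∈ ℝ^{m_{a*}} (which may be taken of the form Δ_{a*} = k·X_{a*}V_{a*}⁻¹x for a suitable scalar k) such that the resulting family (Δ_a)_{a=1}^K ε-strongly attacks x into pulling a*. In particular, if X_{a*} x ≠ 0 then x can be ε-strongly attacked. -/
import Mathlib


open Matrix

/-- The regularized Gram matrix `V = XᵀX + λI`. -/
noncomputable def Vmat {m d : ℕ} (lam : ℝ) (X : Matrix (Fin m) (Fin d) ℝ) :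
    Matrix (Fin d) (Fin d) ℝ :=
  Xᵀ * X + lam • (1 : Matrix (Fin d) (Fin d) ℝ)

/-- The Mahalanobis norm `‖x‖_{V⁻¹} = √(xᵀ V⁻¹ x)`. -/
noncomputable def mahNorm {d : ℕ} (V : Matrix (Fin d) (Fin d) ℝ) (x : Fin d → ℝ) : ℝ :=
  Real.sqrt (x ⬝ᵥ (V⁻¹ *ᵥ x))

/-- The post-attack ridge regression estimate `θ̂ = V⁻¹ Xᵀ (y + Δ)`. -/
noncomputable def thetaHat {m d : ℕ} (lam : ℝ) (X : Matrix (Fin m) (Fin d) ℝ)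
    (y Δ : Fin m → ℝ) : Fin d → ℝ :=
  (Vmat lam X)⁻¹ *ᵥ (Xᵀ *ᵥ (y + Δ))

/-- The post-attack UCB index of arm `a` at context `x`:
`xᵀ θ̂_a(Δ_a) + α_a ‖x‖_{V_a⁻¹}`. -/
noncomputable def ucbIndex {K d : ℕ} (lam : ℝ) (m : Fin K → ℕ)
    (X : ∀ a, Matrix (Fin (m a)) (Fin d) ℝ) (y : ∀ a, Fin (m a) → ℝ)
    (α : Fin K → ℝ) (Δ : ∀ a, Fin (m a) → ℝ) (x : Fin d → ℝ) (a : Fin K) : ℝ :=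
  x ⬝ᵥ thetaHat lam (X a) (y a) (Δ a) + α a * mahNorm (Vmat lam (X a)) x

/-- The perturbation family `Δ` ε-strongly attacks context `x` into pulling arm `astar`. -/
def StronglyAttacks {K d : ℕ} (lam : ℝ) (m : Fin K → ℕ)
    (X : ∀ a, Matrix (Fin (m a)) (Fin d) ℝ) (y : ∀ a, Fin (m a) → ℝ)
    (α : Fin K → ℝ) (astar : Fin K) (ε : ℝ)
    (Δ : ∀ a, Fin (m a) → ℝ) (x : Fin d → ℝ) : Prop :=
  ∀ a : Fin K, a ≠ astar →
    ucbIndex lam m X y α Δ x astar ≥ ε + ucbIndex lam m X y α Δ x a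

/-- The perturbation family `Δ` weakly attacks context `x` into pulling arm `astar`. -/
def WeaklyAttacks {K d : ℕ} (lam : ℝ) (m : Fin K → ℕ)
    (X : ∀ a, Matrix (Fin (m a)) (Fin d) ℝ) (y : ∀ a, Fin (m a) → ℝ)
    (α : Fin K → ℝ) (astar : Fin K)
    (Δ : ∀ a, Fin (m a) → ℝ) (x : Fin d → ℝ) : Prop :=
  ∀ a : Fin K, a ≠ astar →
    ucbIndex lam m X y α Δ x astar > ucbIndex lam m X y α Δ x a


lemma Vmat_posDef {m d : ℕ} (lam : ℝ) (hlam : 0 < lam) (X : Matrix (Fin m) (Fin d) ℝ) :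
    (Vmat lam X).PosDef := by
  have h1 : (Xᵀ * X).PosSemidef := by
    simpa using posSemidef_conjTranspose_mul_self X
  have h2 : (lam • (1 : Matrix (Fin d) (Fin d) ℝ)).PosDef := by
    rw [smul_one_eq_diagonal]
    exact (posDef_diagonal_iff).2 fun _ => hlam
  exact Matrix.PosDef.posSemidef_add h1 h2

lemma Vmat_symm {m d : ℕ} (lam : ℝ) (X : Matrix (Fin m) (Fin d) ℝ) :
    (Vmat lam X)ᵀ = Vmat lam X := by
  simp [Vmat, transpose_add, transpose_mul]

lemma key_linear {mm d : ℕ} (lam : ℝ) (X : Matrix (Fin mm) (Fin d) ℝ)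
    (y : Fin mm → ℝ) (x : Fin d → ℝ) (k : ℝ) :
    x ⬝ᵥ thetaHat lam X y (k • (X *ᵥ ((Vmat lam X)⁻¹ *ᵥ x)))
      = x ⬝ᵥ thetaHat lam X y 0
        + k * ((X *ᵥ ((Vmat lam X)⁻¹ *ᵥ x)) ⬝ᵥ (X *ᵥ ((Vmat lam X)⁻¹ *ᵥ x))) := by
  set V := Vmat lam X with hV
  set w := X *ᵥ (V⁻¹ *ᵥ x) with hw
  have hsymm : V⁻¹ᵀ = V⁻¹ := by
    rw [transpose_nonsing_inv, Vmat_symm]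
  have hx' : x ⬝ᵥ (V⁻¹ *ᵥ (Xᵀ *ᵥ w)) = w ⬝ᵥ w := by
    rw [dotProduct_mulVec, ← mulVec_transpose, hsymm, dotProduct_mulVec,
      ← mulVec_transpose, transpose_transpose]
  simp only [thetaHat, add_zero]
  rw [mulVec_add, mulVec_add, dotProduct_add]
  congr 1
  rw [mulVec_smul, mulVec_smul, dotProduct_smul, smul_eq_mul, ← hV, hx']

lemma w_ne_zero {mm d : ℕ} (lam : ℝ) (hlam : 0 < lam) (X : Matrix (Fin mm) (Fin d) ℝ)
    (x : Fin d → ℝ) (hx : X *ᵥ x ≠ 0) : X *ᵥ ((Vmat lam X)⁻¹ *ᵥ x) ≠ 0 := by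
  intro h
  set V := Vmat lam X with hV
  have hpd := Vmat_posDef lam hlam X
  have hinv : V * V⁻¹ = 1 := Matrix.mul_nonsing_inv _ (isUnit_iff_isUnit_det _ |>.1 hpd.isUnit)
  set u := V⁻¹ *ᵥ x with hu
  have hVu : V *ᵥ u = x := by
    rw [hu, mulVec_mulVec, hinv, one_mulVec]
  have h2 : (Xᵀ * X) *ᵥ u = 0 := by
    rw [← mulVec_mulVec, h, mulVec_zero]
  have h3 : lam • u = x := by
    have : V *ᵥ u = (Xᵀ * X) *ᵥ u + (lam • (1 : Matrix (Fin d) (Fin d) ℝ)) *ᵥ u := by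
      rw [hV, Vmat, add_mulVec]
    rw [hVu, h2, zero_add, smul_mulVec, one_mulVec] at this
    exact this.symm
  have h4 : u = lam⁻¹ • x := by
    rw [← h3, smul_smul, inv_mul_cancel₀ hlam.ne', one_smul]
  rw [h4, mulVec_smul] at h
  exact hx (by simpa [smul_eq_zero, inv_eq_zero, hlam.ne'] using h)

lemma dot_self_pos {n : ℕ} (w : Fin n → ℝ) (hw : w ≠ 0) : 0 < w ⬝ᵥ w := by
  have h0 : 0 ≤ w ⬝ᵥ w := Finset.sum_nonneg fun i _ => mul_self_nonneg _
  rcases h0.lt_or_eq with h | h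
  · exact h
  · exfalso; apply hw; funext i
    have := Finset.sum_eq_zero_iff_of_nonneg (fun i _ => mul_self_nonneg (w i)) |>.1 h.symm i
      (Finset.mem_univ i)
    exact mul_self_eq_zero.1 this

/-- If `X_{a*} x ≠ 0`, then for any fixed perturbations on the other arms there is a
perturbation of the form `Δ_{a*} = k · X_{a*} V_{a*}⁻¹ x` making the family ε-strongly
attack `x`; in particular `x` can be ε-strongly attacked. -/
theorem attackable_of_target_not_in_null {K d : ℕ} (hK : 2 ≤ K) (hd : 1 ≤ d)
    (lam : ℝ) (hlam : 0 < lam) (m : Fin K → ℕ)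
    (X : ∀ a, Matrix (Fin (m a)) (Fin d) ℝ) (y : ∀ a, Fin (m a) → ℝ)
    (α : Fin K → ℝ) (astar : Fin K) (ε : ℝ) (hε : 0 < ε) (x : Fin d → ℝ)
    (hx : X astar *ᵥ x ≠ 0) :
    (∀ Δ : ∀ a, Fin (m a) → ℝ, ∃ k : ℝ,
        StronglyAttacks lam m X y α astar ε
          (Function.update Δ astar
            (k • (X astar *ᵥ ((Vmat lam (X astar))⁻¹ *ᵥ x)))) x) ∧
      ∃ Δ : ∀ a, Fin (m a) → ℝ, StronglyAttacks lam m X y α astar ε Δ x := by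
  have main : ∀ Δ : ∀ a, Fin (m a) → ℝ, ∃ k : ℝ,
      StronglyAttacks lam m X y α astar ε
        (Function.update Δ astar
          (k • (X astar *ᵥ ((Vmat lam (X astar))⁻¹ *ᵥ x)))) x := by
    intro Δ
    set w := X astar *ᵥ ((Vmat lam (X astar))⁻¹ *ᵥ x) with hw
    have hwne : w ≠ 0 := w_ne_zero lam hlam (X astar) x hx
    have hc : 0 < w ⬝ᵥ w := dot_self_pos _ hwne
    set c := w ⬝ᵥ w with hcdef
    set t0 := x ⬝ᵥ thetaHat lam (X astar) (y astar) 0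
      + α astar * mahNorm (Vmat lam (X astar)) x with ht0
    haveI : Nonempty (Fin K) := ⟨astar⟩
    set f : Fin K → ℝ := fun a => (ε + ucbIndex lam m X y α Δ x a - t0) / c with hf
    set k := Finset.univ.sup' Finset.univ_nonempty f with hk
    refine ⟨k, ?_⟩
    intro a ha
    have hka : f a ≤ k := Finset.le_sup' f (Finset.mem_univ a)
    have h1 : ucbIndex lam m X y α (Function.update Δ astar (k • w)) x astar
        = t0 + k * c := by
      unfold ucbIndex
      rw [Function.update_self, hw, key_linear lam, ht0, hcdef, hw]
      ring
    have h2 : ucbIndex lam m X y α (Function.update Δ astar (k • w)) x a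
        = ucbIndex lam m X y α Δ x a := by
      unfold ucbIndex
      rw [Function.update_of_ne ha]
    rw [h1, h2, ge_iff_le]
    have hdiv : ε + ucbIndex lam m X y α Δ x a - t0 ≤ k * c := (div_le_iff₀ hc).1 hka
    linarith
  refine ⟨main, ?_⟩
  obtain ⟨k, hk⟩ := main (fun _ _ => 0)
  exact ⟨_, hk⟩
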